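/- If J is a strongly stable monomial ideal in K[x_1,...,x_n], then the intersection I = ∩_{σ ∈ 𝔖_n} σ(J) is a symmetric strongly shifted ideal, and the partitions λ with x^λ ∈ I are exactly the partitions λ ∈ P_n with x^λ ∈ J. -/

import Mathlib

open MvPolynomial

/-- The monomial `x^a` in `K[x_1,...,x_n]`. -/
noncomputable def mon (K : Type) [Field K] (n : ℕ) (a : Fin n → ℕ) :
    MvPolynomial (Fin n) K :=
  monomial (Finsupp.equivFunOnFinite.symm a) 1

/-- A monomial ideal: an ideal generated by monomials. -/
def IsMonomialIdeal (K : Type) [Field K] (n : ℕ)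
    (I : Ideal (MvPolynomial (Fin n) K)) : Prop :=
  ∃ S : Set (Fin n → ℕ), I = Ideal.span (mon K n '' S)

/-- A symmetric (`𝔖_n`-fixed) ideal. -/
def IsSymmetricIdeal (K : Type) [Field K] (n : ℕ)
    (I : Ideal (MvPolynomial (Fin n) K)) : Prop :=
  ∀ σ : Equiv.Perm (Fin n), Ideal.map (rename (σ : Fin n → Fin n)) I = I

/-- The exponent vector obtained from `a` by the Borel move `x^a ↦ x^a · x_i / x_j`. -/
def borelMoveVec (n : ℕ) (a : Fin n → ℕ) (i j : Fin n) : Fin n → ℕ :=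
  fun k => if k = i then a k + 1 else if k = j then a k - 1 else a k

/-- A symmetric strongly shifted ideal (sssi). -/
def IsSSSI (K : Type) [Field K] (n : ℕ)
    (I : Ideal (MvPolynomial (Fin n) K)) : Prop :=
  IsMonomialIdeal K n I ∧ IsSymmetricIdeal K n I ∧
    ∀ lam : Fin n → ℕ, Monotone lam → mon K n lam ∈ I →
      ∀ i j : Fin n, i < j → lam i < lam j →
        mon K n (borelMoveVec n lam i j) ∈ I

/-- The dominance order on partitions: `μ ⊴ λ`. -/
def dominates (n : ℕ) (μ lam : Fin n → ℕ) : Prop :=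
  ∀ k : Fin n, ∑ i ∈ Finset.Ici k, μ i ≤ ∑ i ∈ Finset.Ici k, lam i

/-- A strongly stable monomial ideal: a monomial ideal closed under the Borel
moves `x^a ↦ x^a · x_i / x_j` for `i < j` with `a_j ≠ 0`. -/
def IsStronglyStable (K : Type) [Field K] (n : ℕ)
    (I : Ideal (MvPolynomial (Fin n) K)) : Prop :=
  IsMonomialIdeal K n I ∧
    ∀ a : Fin n → ℕ, mon K n a ∈ I → ∀ i j : Fin n, i < j → a j ≠ 0 →
      mon K n (borelMoveVec n a i j) ∈ I

/-
A monomial `x^a` lies in `⋂_σ σ(J)` iff `x^(a ∘ σ) ∈ J` for every permutation `σ`. Every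
rearrangement of a partition `λ` is reached from `λ` by swaps of entries `a_i ≤ a_j` with `i < j`,
and such a swap is `a_j - a_i` Borel moves from `x_j` to `x_i`; hence `x^λ ∈ J` puts every
`x^(λ ∘ σ)` in `J`. For the shifting property, after permuting the variables one has to move a unit
from position `q` to position `p` of a vector `c` with `c_p < c_q` all of whose rearrangements lie
in `J`. If `p < q` this is a Borel move; if `q < p`, swap the two entries first and then move
`c_q - c_p - 1` units from `p` to `q`.
-/

section Rename

variable {ι R : Type*} [CommSemiring R]

theorem map_rename_perm_eq_comap (σ : Equiv.Perm ι) (I : Ideal (MvPolynomial ι R)) :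
    I.map (rename σ) = I.comap (rename σ.symm) :=
  Ideal.map_comap_of_equiv (renameEquiv R σ).toRingEquiv

noncomputable def symmetrization (J : Ideal (MvPolynomial ι R)) : Ideal (MvPolynomial ι R) :=
  ⨅ σ : Equiv.Perm ι, J.map (rename σ)

theorem map_rename_symmetrization (ρ : Equiv.Perm ι) (J : Ideal (MvPolynomial ι R)) :
    (symmetrization J).map (rename ρ) = symmetrization J := by
  simp only [symmetrization, map_rename_perm_eq_comap, Ideal.comap_iInf]
  refine (Equiv.mulLeft ρ).iInf_congr fun σ => Ideal.ext fun f => ?_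
  simp [Ideal.mem_comap, rename_rename, Equiv.Perm.mul_def, Equiv.coe_trans]

end Rename

section Monomials

variable {K : Type} [Field K] {n : ℕ}

theorem rename_mon (σ : Equiv.Perm (Fin n)) (a : Fin n → ℕ) :
    rename σ (mon K n a) = mon K n (a ∘ σ.symm) := by
  rw [mon, mon, rename_monomial]
  congr
  ext k
  simp [Finsupp.mapDomain_equiv_apply]

theorem mon_mem_map_rename_iff (σ : Equiv.Perm (Fin n)) (J : Ideal (MvPolynomial (Fin n) K))
    (a : Fin n → ℕ) : mon K n a ∈ J.map (rename σ) ↔ mon K n (a ∘ σ) ∈ J := by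
  rw [map_rename_perm_eq_comap, Ideal.mem_comap, rename_mon, Equiv.symm_symm]

theorem mon_mem_symmetrization_iff (J : Ideal (MvPolynomial (Fin n) K)) (a : Fin n → ℕ) :
    mon K n a ∈ symmetrization J ↔ ∀ σ : Equiv.Perm (Fin n), mon K n (a ∘ σ) ∈ J := by
  simp only [symmetrization, Ideal.mem_iInf, mon_mem_map_rename_iff]

theorem mon_coe (d : Fin n →₀ ℕ) : mon K n d = monomial d 1 := by
  simp [mon]

theorem image_mon (S : Set (Fin n → ℕ)) :
    mon K n '' S = (fun d => monomial d (1 : K)) '' (Finsupp.equivFunOnFinite.symm '' S) := by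
  rw [Set.image_image]
  rfl

theorem isMonomialIdeal_iff {I : Ideal (MvPolynomial (Fin n) K)} :
    IsMonomialIdeal K n I ↔ ∀ f ∈ I, ∀ d ∈ f.support, monomial d (1 : K) ∈ I := by
  constructor
  · rintro ⟨S, rfl⟩ f hf d hd
    rw [image_mon, mem_ideal_span_monomial_image] at hf ⊢
    obtain ⟨s, hs, hsd⟩ := hf d hd
    intro e he
    rw [Finset.mem_singleton.mp (support_monomial_subset he)]
    exact ⟨s, hs, hsd⟩
  · intro h
    refine ⟨{a | mon K n a ∈ I}, le_antisymm (fun f hf => ?_) ?_⟩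
    · rw [image_mon, mem_ideal_span_monomial_image]
      exact fun d hd => ⟨d, ⟨d, by simpa [mon_coe] using h f hf d hd, by simp⟩, le_rfl⟩
    · rw [Ideal.span_le]
      rintro _ ⟨a, ha, rfl⟩
      exact ha

theorem IsMonomialIdeal.map_rename {I : Ideal (MvPolynomial (Fin n) K)}
    (hI : IsMonomialIdeal K n I) (σ : Equiv.Perm (Fin n)) :
    IsMonomialIdeal K n (I.map (rename σ)) := by
  obtain ⟨S, rfl⟩ := hI
  refine ⟨(· ∘ σ.symm) '' S, ?_⟩
  rw [Ideal.map_span, Set.image_image, Set.image_image]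
  simp_rw [rename_mon]

theorem IsMonomialIdeal.iInf {ι : Type*} {I : ι → Ideal (MvPolynomial (Fin n) K)}
    (hI : ∀ i, IsMonomialIdeal K n (I i)) : IsMonomialIdeal K n (⨅ i, I i) := by
  simp only [isMonomialIdeal_iff, Ideal.mem_iInf] at hI ⊢
  exact fun f hf d hd i => hI i f (hf i) d hd

def borelShiftVec (n : ℕ) (a : Fin n → ℕ) (i j : Fin n) (k : ℕ) : Fin n → ℕ :=
  fun t => if t = i then a t + k else if t = j then a t - k else a t

theorem comp_swap_eq_borelShiftVec (a : Fin n → ℕ) {i j : Fin n} (h : a i ≤ a j) :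
    a ∘ Equiv.swap i j = borelShiftVec n a i j (a j - a i) := by
  funext t
  simp only [Function.comp_apply, borelShiftVec, Equiv.swap_apply_def]
  split_ifs <;> subst_vars <;> omega

theorem borelMoveVec_comp_perm (a : Fin n → ℕ) (i j : Fin n) (σ : Equiv.Perm (Fin n)) :
    borelMoveVec n a i j ∘ σ = borelMoveVec n (a ∘ σ) (σ.symm i) (σ.symm j) := by
  funext t
  simp [borelMoveVec, Equiv.eq_symm_apply]

namespace IsStronglyStable

variable {J : Ideal (MvPolynomial (Fin n) K)}

theorem mon_borelShiftVec_mem (hJ : IsStronglyStable K n J) {a : Fin n → ℕ}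
    (ha : mon K n a ∈ J) {i j : Fin n} (hij : i < j) {k : ℕ} (hk : k ≤ a j) :
    mon K n (borelShiftVec n a i j k) ∈ J := by
  induction k with
  | zero =>
    convert ha using 2
    funext t
    simp [borelShiftVec]
  | succ k ih =>
    have hji : j ≠ i := hij.ne'
    have hj : borelShiftVec n a i j k j ≠ 0 := by
      simp only [borelShiftVec, hji, ↓reduceIte]
      omega
    convert hJ.2 _ (ih (by omega)) i j hij hj using 2
    funext t
    simp only [borelShiftVec, borelMoveVec]
    split_ifs <;> subst_vars <;> omega

theorem mon_comp_swap_mem (hJ : IsStronglyStable K n J) {a : Fin n → ℕ} (ha : mon K n a ∈ J)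
    {i j : Fin n} (hij : i < j) (h : a i ≤ a j) : mon K n (a ∘ Equiv.swap i j) ∈ J := by
  rw [comp_swap_eq_borelShiftVec a h]
  exact hJ.mon_borelShiftVec_mem ha hij (Nat.sub_le _ _)

theorem mon_comp_perm_mem (hJ : IsStronglyStable K n J) {lam : Fin n → ℕ} (hlam : Monotone lam)
    (h : mon K n lam ∈ J) (σ : Equiv.Perm (Fin n)) : mon K n (lam ∘ σ) ∈ J := by
  suffices ∀ b : Lex (Fin n → ℕ), ∀ σ : Equiv.Perm (Fin n), toLex (lam ∘ σ) = b →
      mon K n (lam ∘ σ) ∈ J from this _ σ rfl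
  intro b
  -- swapping a descent of `lam ∘ σ` makes it lexicographically smaller
  induction b using WellFoundedLT.induction with
  | _ b ih =>
    rintro σ rfl
    by_cases hσ : Monotone (lam ∘ σ)
    · rw [Tuple.unique_monotone hσ (τ := 1) (by simpa using hlam)]
      simpa using h
    simp only [Monotone, not_forall] at hσ
    obtain ⟨x, y, hxy, hlt⟩ := hσ
    have hxy : x < y := lt_of_le_of_ne hxy (by rintro rfl; exact hlt le_rfl)
    have hswap : lam ∘ σ = (lam ∘ ⇑(σ * Equiv.swap x y)) ∘ Equiv.swap x y := by
      funext t
      simp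
    rw [hswap]
    refine hJ.mon_comp_swap_mem (ih _ ?_ _ rfl) hxy ?_
    · refine ⟨x, fun t ht => ?_, ?_⟩
      · simp [Equiv.swap_apply_of_ne_of_ne ht.ne (ht.trans hxy).ne]
      · simpa [Equiv.Perm.mul_apply] using hlt
    · simpa [Equiv.Perm.mul_apply] using (not_le.mp hlt).le

theorem mon_borelMoveVec_mem_of_forall_perm (hJ : IsStronglyStable K n J) {c : Fin n → ℕ}
    (hc : ∀ τ : Equiv.Perm (Fin n), mon K n (c ∘ τ) ∈ J) {p q : Fin n} (hpq : p ≠ q)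
    (hlt : c p < c q) : mon K n (borelMoveVec n c p q) ∈ J := by
  rcases hpq.lt_or_gt with h | h
  · exact hJ.2 c (by simpa using hc 1) p q h (by omega)
  · have hshift : borelMoveVec n c p q =
        borelShiftVec n (c ∘ Equiv.swap p q) q p (c q - c p - 1) := by
      funext t
      simp only [borelMoveVec, borelShiftVec, Function.comp_apply, Equiv.swap_apply_def]
      split_ifs <;> subst_vars <;> omega
    rw [hshift]
    exact hJ.mon_borelShiftVec_mem (hc _) h
      (by simp only [Function.comp_apply, Equiv.swap_apply_left]; omega)

theorem mon_borelMoveVec_mem_symmetrization (hJ : IsStronglyStable K n J) {lam : Fin n → ℕ}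
    (h : mon K n lam ∈ symmetrization J) {i j : Fin n} (hij : i ≠ j) (hlt : lam i < lam j) :
    mon K n (borelMoveVec n lam i j) ∈ symmetrization J := by
  rw [mon_mem_symmetrization_iff] at h ⊢
  intro σ
  rw [borelMoveVec_comp_perm]
  refine hJ.mon_borelMoveVec_mem_of_forall_perm (fun τ => ?_) (by simpa using hij)
    (by simpa using hlt)
  simpa [Function.comp_assoc] using h (σ * τ)

end IsStronglyStable

end Monomials

/-- If `J` is a strongly stable monomial ideal, then its symmetrization
`I = ∩_{σ ∈ 𝔖_n} σ(J)` is a symmetric strongly shifted ideal, and the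
partitions `λ` with `x^λ ∈ I` are exactly the partitions `λ` with `x^λ ∈ J`. -/
theorem symmetrization_of_stronglyStable (K : Type) [Field K] (n : ℕ)
    (J : Ideal (MvPolynomial (Fin n) K)) (hJ : IsStronglyStable K n J) :
    IsSSSI K n (⨅ σ : Equiv.Perm (Fin n), Ideal.map (rename (σ : Fin n → Fin n)) J) ∧
    ∀ lam : Fin n → ℕ, Monotone lam →
      ((mon K n lam ∈
          ⨅ σ : Equiv.Perm (Fin n), Ideal.map (rename (σ : Fin n → Fin n)) J) ↔
        mon K n lam ∈ J) := by
  refine ⟨⟨IsMonomialIdeal.iInf fun σ => hJ.1.map_rename σ,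
    fun ρ => map_rename_symmetrization ρ J,
    fun _ _ h _ _ hij hlt => hJ.mon_borelMoveVec_mem_symmetrization h hij.ne hlt⟩,
    fun lam hlam => (mon_mem_symmetrization_iff J lam).trans ?_⟩
  exact ⟨fun h => by simpa using h 1, hJ.mon_comp_perm_mem hlam⟩
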